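/- arXiv:1410.4181 — 5 statements merged into one kernel-verified Lean document; each statement's English description precedes it below -/
import Mathlib

section
/- Let h : (0,2) × (-1,1) → ℝ be defined by h(x₁,x₂) = (2/π)·ln( cos(πx₂/2) / sin(πx₁/2) ). Then for every θ ∈ (-π/2, 0), the limit as t → 0⁺ of h( t·cos(θ), 1 + t·sin(θ) ) exists and equals (2/π)·ln( -tan(θ) ). -/
open Real Set Filter

/-- The Scherk-surface function `h(x₁,x₂) = (2/π)·ln( cos(πx₂/2) / sin(πx₁/2) )`. -/
noncomputable def scherk (x : ℝ × ℝ) : ℝ :=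
  (2 / π) * Real.log (Real.cos (π * x.2 / 2) / Real.sin (π * x.1 / 2))

/-!
Along the ray `t ↦ (t c, 1 + t s)` the numerator is `cos (π/2 + πst/2) = -sin (πst/2)` and the
denominator is `sin (πct/2)`; both vanish linearly in `t`, so their quotient tends to `-s/c`, which
is `-tan θ` for `(c, s) = (cos θ, sin θ)`, and the logarithm is continuous there.
-/

open Topology

lemma tendsto_sin_mul_div_self (a : ℝ) :
    Tendsto (fun t : ℝ => sin (a * t) / t) (𝓝[≠] 0) (𝓝 a) := by
  have hderiv : HasDerivAt (fun t : ℝ => sin (a * t)) a 0 := by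
    simpa using ((hasDerivAt_id (0 : ℝ)).const_mul a).sin
  refine (hasDerivAt_iff_tendsto_slope.mp hderiv).congr fun t => ?_
  simp [slope_def_field]

lemma tendsto_sin_mul_div_sin_mul (a : ℝ) {b : ℝ} (hb : b ≠ 0) :
    Tendsto (fun t : ℝ => sin (a * t) / sin (b * t)) (𝓝[≠] 0) (𝓝 (a / b)) := by
  refine ((tendsto_sin_mul_div_self a).div (tendsto_sin_mul_div_self b) hb).congr' ?_
  filter_upwards [self_mem_nhdsWithin] with t (ht : t ≠ 0)
  exact div_div_div_cancel_right₀ ht _ _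

lemma scherk_ray (c s t : ℝ) :
    scherk (t * c, 1 + t * s) =
      (2 / π) * log (-(sin (π * s / 2 * t) / sin (π * c / 2 * t))) := by
  have hnum : π * (1 + t * s) / 2 = π * s / 2 * t + π / 2 := by ring
  have hden : π * (t * c) / 2 = π * c / 2 * t := by ring
  rw [scherk, hnum, hden, cos_add_pi_div_two, neg_div]

theorem tendsto_scherk_ray {c s : ℝ} (hc : c ≠ 0) (hs : s ≠ 0) :
    Tendsto (fun t : ℝ => scherk (t * c, 1 + t * s)) (𝓝[≠] 0)
      (𝓝 ((2 / π) * log (-(s / c)))) := by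
  have hratio : Tendsto (fun t : ℝ => -(sin (π * s / 2 * t) / sin (π * c / 2 * t))) (𝓝[≠] 0)
      (𝓝 (-(s / c))) := by
    have hquot : π * s / 2 / (π * c / 2) = s / c := by field_simp
    have hc' : π * c / 2 ≠ 0 := by positivity
    simpa only [hquot] using (tendsto_sin_mul_div_sin_mul (π * s / 2) hc').neg
  have hlog := (continuousAt_log (neg_ne_zero.mpr (div_ne_zero hs hc))).tendsto
  simpa only [scherk_ray, Function.comp_def] using (hlog.comp hratio).const_mul (2 / π)

/-- For every `θ ∈ (-π/2, 0)`, `h(t·cos θ, 1 + t·sin θ) → (2/π)·ln(-tan θ)` as `t → 0⁺`. -/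
theorem stmt2 (θ : ℝ) (hθ : θ ∈ Ioo (-(π/2)) 0) :
    Tendsto (fun t : ℝ => scherk (t * Real.cos θ, 1 + t * Real.sin θ))
      (nhdsWithin 0 (Ioi 0)) (nhds ((2 / π) * Real.log (-Real.tan θ))) := by
  obtain ⟨hθ_lo, hθ_hi⟩ := hθ
  have hcos : cos θ ≠ 0 := (cos_pos_of_mem_Ioo ⟨hθ_lo, by linarith [pi_pos]⟩).ne'
  have hsin : sin θ ≠ 0 := (sin_neg_of_neg_of_neg_pi_lt hθ_hi (by linarith [pi_pos])).ne
  rw [tan_eq_sin_div_cos]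
  exact (tendsto_scherk_ray hcos hsin).mono_left (nhdsWithin_mono _ fun t ht => ne_of_gt ht)
end

section
/- Let n ≥ 2, let Ω ⊆ {(x₁,x₂) ∈ ℝ² : x₂ > 0} be open, and let g be C² on Ω. Define g̃(x₁, x') = g(x₁, |x'|) for (x₁,x') ∈ ℝ × ℝ^{n-1} with (x₁,|x'|) ∈ Ω. Then for x = (x₁, x') with r = |x'| > 0 and (x₁,r) ∈ Ω: div( ∇g̃/√(1+|∇g̃|²) )(x) = div( ∇g/√(1+|∇g|²) )(x₁,r) + ((n-2)/r)·g_{x₂}(x₁,r)/√(1+|∇g(x₁,r)|²). -/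
open Real Set

/-- Directional (partial) derivative of `f : ℝ × ℝ → ℝ` in direction `v`. -/
noncomputable def pdA (v : ℝ × ℝ) (f : ℝ × ℝ → ℝ) (q : ℝ × ℝ) : ℝ := fderiv ℝ f q v

/-- Directional (partial) derivative of a function of `(x₁, x') ∈ ℝ × ℝ^{n-1}`
in direction `v`. -/
noncomputable def pdB (n : ℕ) (v : ℝ × EuclideanSpace ℝ (Fin (n-1)))
    (f : ℝ × EuclideanSpace ℝ (Fin (n-1)) → ℝ)
    (x : ℝ × EuclideanSpace ℝ (Fin (n-1))) : ℝ :=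
  fderiv ℝ f x v

/-- `div(Tf)` for `f : ℝ × ℝ → ℝ`. -/
noncomputable def divTA (f : ℝ × ℝ → ℝ) (q : ℝ × ℝ) : ℝ :=
  pdA (1, 0) (fun y => pdA (1, 0) f y /
      Real.sqrt (1 + (pdA (1, 0) f y)^2 + (pdA (0, 1) f y)^2)) q +
  pdA (0, 1) (fun y => pdA (0, 1) f y /
      Real.sqrt (1 + (pdA (1, 0) f y)^2 + (pdA (0, 1) f y)^2)) q

/-- `div(Tf)` for `f : ℝ × ℝ^{n-1} → ℝ`. -/
noncomputable def divTB (n : ℕ) (f : ℝ × EuclideanSpace ℝ (Fin (n-1)) → ℝ)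
    (x : ℝ × EuclideanSpace ℝ (Fin (n-1))) : ℝ :=
  pdB n (1, 0) (fun y => pdB n (1, 0) f y /
      Real.sqrt (1 + (pdB n (1, 0) f y)^2
        + ∑ j, (pdB n (0, EuclideanSpace.single j 1) f y)^2)) x +
  ∑ i, pdB n (0, EuclideanSpace.single i 1)
    (fun y => pdB n (0, EuclideanSpace.single i 1) f y /
      Real.sqrt (1 + (pdB n (1, 0) f y)^2
        + ∑ j, (pdB n (0, EuclideanSpace.single j 1) f y)^2)) x

/-!
Write `φ(x₁, x') = (x₁, |x'|)`, so that `g̃ = g ∘ φ`. By the chain rule `∂₁g̃ = g₁ ∘ φ` and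
`∂_e g̃ = ⟨x', e⟩/|x'| · g₂ ∘ φ` for `e` in the `x'`-space; summing squares over an orthonormal
basis gives `|∇g̃|² = |∇g|² ∘ φ`. Hence near `x` the field `Tg̃` is
`((Tg)₁ ∘ φ, ((Tg)₂ ∘ φ) · x'/|x'|)`, and the product rule together with
`div_{x'} (x'/|x'|) = (n - 2)/|x'|` on `ℝ^{n-1}` gives the formula.
-/

open RealInnerProductSpace Topology

theorem hasFDerivAt_norm_of_ne_zero {E : Type*} [NormedAddCommGroup E] [InnerProductSpace ℝ E]
    {x : E} (hx : x ≠ 0) : HasFDerivAt (‖·‖) (‖x‖⁻¹ • innerSL ℝ x) x := by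
  have hsq : HasFDerivAt (fun y : E => ‖y‖ ^ 2) (2 • innerSL ℝ x) x :=
    (hasStrictFDerivAt_norm_sq x).hasFDerivAt
  have hsqrt := (Real.hasDerivAt_sqrt (pow_ne_zero 2 (norm_ne_zero_iff.mpr hx))).comp_hasFDerivAt
    x hsq
  simp only [Function.comp_def, Real.sqrt_sq (norm_nonneg _)] at hsqrt
  refine hsqrt.congr_fderiv ?_
  ext v
  simp only [smul_apply, smul_eq_mul, nsmul_eq_mul]
  field_simp
  norm_num

theorem hasFDerivAt_inner_div_norm {E : Type*} [NormedAddCommGroup E] [InnerProductSpace ℝ E]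
    {x : E} (hx : x ≠ 0) (e : E) :
    HasFDerivAt (fun z : E => ⟪z, e⟫ / ‖z‖)
      (‖x‖⁻¹ • innerSL ℝ e - (⟪x, e⟫ / ‖x‖ ^ 3) • innerSL ℝ x) x := by
  have hr : ‖x‖ ≠ 0 := norm_ne_zero_iff.mpr hx
  have hinner : HasFDerivAt (fun z : E => ⟪z, e⟫) (innerSL ℝ e) x := by
    convert (innerSL ℝ e).hasFDerivAt using 1
    ext z
    exact real_inner_comm e z
  have hinv : HasFDerivAt (fun z : E => ‖z‖⁻¹) _ x :=
    (hasDerivAt_inv hr).comp_hasFDerivAt x (hasFDerivAt_norm_of_ne_zero hx)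
  simp only [div_eq_mul_inv]
  refine (hinner.fun_mul hinv).congr_fderiv ?_
  ext v
  simp only [add_apply, sub_apply, smul_apply, innerSL_apply_apply, smul_eq_mul]
  field_simp
  ring

section RadialExtension

variable {E : Type*} [NormedAddCommGroup E]

noncomputable def radialProj (z : ℝ × E) : ℝ × ℝ := (z.1, ‖z.2‖)

theorem continuous_radialProj : Continuous (radialProj (E := E)) :=
  continuous_fst.prodMk (continuous_norm.comp continuous_snd)

theorem eventually_ne_zero_and_differentiableAt_radialProj {F : ℝ × ℝ → ℝ} {x : ℝ × E}
    (hx : x.2 ≠ 0)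
    (hF : ∀ᶠ q in 𝓝 (radialProj x), DifferentiableAt ℝ F q) :
    ∀ᶠ z in 𝓝 x, z.2 ≠ 0 ∧ DifferentiableAt ℝ F (radialProj z) :=
  (continuous_snd.continuousAt.eventually_ne hx).and
    ((continuous_radialProj.tendsto x).eventually hF)

variable [InnerProductSpace ℝ E]

theorem hasFDerivAt_radialProj {y : ℝ × E} (hy : y.2 ≠ 0) :
    HasFDerivAt radialProj ((ContinuousLinearMap.fst ℝ ℝ E).prod
      ((‖y.2‖⁻¹ • innerSL ℝ y.2).comp (ContinuousLinearMap.snd ℝ ℝ E))) y :=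
  hasFDerivAt_fst.prodMk ((hasFDerivAt_norm_of_ne_zero hy).comp y hasFDerivAt_snd)

variable {F : ℝ × ℝ → ℝ} {y : ℝ × E}

theorem fderiv_comp_radialProj_apply (hy : y.2 ≠ 0) (hF : DifferentiableAt ℝ F (radialProj y))
    (v : ℝ × E) :
    fderiv ℝ (F ∘ radialProj) y v = fderiv ℝ F (radialProj y) (v.1, ⟪y.2, v.2⟫ / ‖y.2‖) := by
  rw [(hF.hasFDerivAt.comp y (hasFDerivAt_radialProj hy)).fderiv]
  simp [div_eq_inv_mul]

theorem fderiv_comp_radialProj_fst (hy : y.2 ≠ 0) (hF : DifferentiableAt ℝ F (radialProj y)) :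
    fderiv ℝ (F ∘ radialProj) y (1, 0) = fderiv ℝ F (radialProj y) (1, 0) := by
  simp [fderiv_comp_radialProj_apply hy hF]

theorem fderiv_comp_radialProj_snd (hy : y.2 ≠ 0) (hF : DifferentiableAt ℝ F (radialProj y))
    (e : E) :
    fderiv ℝ (F ∘ radialProj) y (0, e) = ⟪y.2, e⟫ / ‖y.2‖ * fderiv ℝ F (radialProj y) (0, 1) := by
  rw [fderiv_comp_radialProj_apply hy hF, ← smul_eq_mul, ← map_smul, Prod.smul_mk, smul_zero,
    smul_eq_mul, mul_one]

theorem sum_sq_fderiv_comp_radialProj_snd {ι : Type*} [Fintype ι] (b : OrthonormalBasis ι ℝ E)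
    (hy : y.2 ≠ 0) (hF : DifferentiableAt ℝ F (radialProj y)) :
    ∑ i, (fderiv ℝ (F ∘ radialProj) y (0, b i)) ^ 2 = (fderiv ℝ F (radialProj y) (0, 1)) ^ 2 := by
  have hr : ‖y.2‖ ≠ 0 := norm_ne_zero_iff.mpr hy
  simp only [fderiv_comp_radialProj_snd hy hF, mul_pow, div_pow, ← Finset.sum_mul, ← Finset.sum_div,
    b.sum_sq_inner_left]
  field_simp

theorem fderiv_comp_radialProj_mul_inner_div_norm_apply (hy : y.2 ≠ 0)
    (hF : DifferentiableAt ℝ F (radialProj y)) (e : E) :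
    fderiv ℝ (fun z => F (radialProj z) * (⟪z.2, e⟫ / ‖z.2‖)) y (0, e)
      = ⟪y.2, e⟫ ^ 2 / ‖y.2‖ ^ 2 * fderiv ℝ F (radialProj y) (0, 1)
        + F (radialProj y) * (‖e‖ ^ 2 / ‖y.2‖ - ⟪y.2, e⟫ ^ 2 / ‖y.2‖ ^ 3) := by
  have hr : ‖y.2‖ ≠ 0 := norm_ne_zero_iff.mpr hy
  have hprod : HasFDerivAt (fun z => F (radialProj z) * (⟪z.2, e⟫ / ‖z.2‖)) _ y :=
    (hF.comp y (hasFDerivAt_radialProj hy).differentiableAt).hasFDerivAt.fun_mul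
      ((hasFDerivAt_inner_div_norm hy e).comp y hasFDerivAt_snd)
  rw [hprod.fderiv]
  simp only [add_apply, smul_apply, ContinuousLinearMap.coe_comp, Function.comp_apply, sub_apply,
    innerSL_apply_apply, smul_eq_mul, ContinuousLinearMap.coe_snd', real_inner_self_eq_norm_sq,
    real_inner_comm e, fderiv_comp_radialProj_snd hy hF]
  field_simp
  ring

theorem sum_fderiv_comp_radialProj_mul_inner_div_norm {ι : Type*} [Fintype ι]
    (b : OrthonormalBasis ι ℝ E) (hy : y.2 ≠ 0) (hF : DifferentiableAt ℝ F (radialProj y)) :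
    ∑ i, fderiv ℝ (fun z => F (radialProj z) * (⟪z.2, b i⟫ / ‖z.2‖)) y (0, b i)
      = fderiv ℝ F (radialProj y) (0, 1) + (Fintype.card ι - 1) / ‖y.2‖ * F (radialProj y) := by
  have hr : ‖y.2‖ ≠ 0 := norm_ne_zero_iff.mpr hy
  simp only [fderiv_comp_radialProj_mul_inner_div_norm_apply hy hF, b.orthonormal.1,
    Finset.sum_add_distrib, ← Finset.sum_mul, ← Finset.mul_sum, Finset.sum_sub_distrib,
    ← Finset.sum_div, b.sum_sq_inner_left, Finset.sum_const, Finset.card_univ, nsmul_eq_mul]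
  field_simp

end RadialExtension

noncomputable def planarFlux (v : ℝ × ℝ) (F : ℝ × ℝ → ℝ) (q : ℝ × ℝ) : ℝ :=
  pdA v F q / Real.sqrt (1 + (pdA (1, 0) F q) ^ 2 + (pdA (0, 1) F q) ^ 2)

theorem divTA_eq (F : ℝ × ℝ → ℝ) (q : ℝ × ℝ) :
    divTA F q = pdA (1, 0) (planarFlux (1, 0) F) q + pdA (0, 1) (planarFlux (0, 1) F) q :=
  rfl

theorem ContDiffAt.differentiableAt_planarFlux {F : ℝ × ℝ → ℝ} {q : ℝ × ℝ}
    (hF : ContDiffAt ℝ 2 F q) (v : ℝ × ℝ) : DifferentiableAt ℝ (planarFlux v F) q := by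
  have hpd : ∀ w, DifferentiableAt ℝ (pdA w F) q := fun w =>
    ((hF.fderiv_right (m := 1) (by norm_num)).differentiableAt one_ne_zero).clm_apply
      (differentiableAt_const w)
  have hpos : 0 < 1 + (pdA (1, 0) F q) ^ 2 + (pdA (0, 1) F q) ^ 2 := by positivity
  unfold planarFlux
  fun_prop (disch := first | exact hpos.ne' | exact (Real.sqrt_pos.mpr hpos).ne')

section Divergence

variable {ι E : Type*} [Fintype ι] [NormedAddCommGroup E] [InnerProductSpace ℝ E]
  (b : OrthonormalBasis ι ℝ E)

noncomputable def flux (v : ℝ × E) (f : ℝ × E → ℝ) (y : ℝ × E) : ℝ :=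
  fderiv ℝ f y v / Real.sqrt (1 + (fderiv ℝ f y (1, 0)) ^ 2 + ∑ j, (fderiv ℝ f y (0, b j)) ^ 2)

/-- `divTB` with `ℝ^{n-1}` replaced by any inner product space, partial derivatives in `E` being
taken along the orthonormal basis `b`. -/
noncomputable def divT (f : ℝ × E → ℝ) (y : ℝ × E) : ℝ :=
  fderiv ℝ (flux b (1, 0) f) y (1, 0) + ∑ i, fderiv ℝ (flux b (0, b i) f) y (0, b i)

theorem divTB_eq_divT (n : ℕ) (f : ℝ × EuclideanSpace ℝ (Fin (n - 1)) → ℝ)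
    (x : ℝ × EuclideanSpace ℝ (Fin (n - 1))) :
    divTB n f x = divT (EuclideanSpace.basisFun (Fin (n - 1)) ℝ) f x := by
  unfold divTB divT flux pdB
  simp only [EuclideanSpace.basisFun_apply]

variable {F : ℝ × ℝ → ℝ} {y : ℝ × E}

theorem flux_comp_radialProj (hy : y.2 ≠ 0) (hF : DifferentiableAt ℝ F (radialProj y))
    (v : ℝ × E) :
    flux b v (F ∘ radialProj) y = fderiv ℝ (F ∘ radialProj) y v /
      Real.sqrt (1 + (pdA (1, 0) F (radialProj y)) ^ 2 + (pdA (0, 1) F (radialProj y)) ^ 2) := by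
  rw [flux, fderiv_comp_radialProj_fst hy hF, sum_sq_fderiv_comp_radialProj_snd b hy hF]
  rfl

variable {x : ℝ × E}

theorem flux_fst_comp_radialProj_eventuallyEq (hx : x.2 ≠ 0)
    (hF : ∀ᶠ q in 𝓝 (radialProj x), DifferentiableAt ℝ F q) :
    flux b (1, 0) (F ∘ radialProj) =ᶠ[𝓝 x] planarFlux (1, 0) F ∘ radialProj := by
  filter_upwards [eventually_ne_zero_and_differentiableAt_radialProj hx hF] with z ⟨hz, hFz⟩
  rw [flux_comp_radialProj b hz hFz, fderiv_comp_radialProj_fst hz hFz]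
  rfl

theorem flux_snd_comp_radialProj_eventuallyEq (hx : x.2 ≠ 0)
    (hF : ∀ᶠ q in 𝓝 (radialProj x), DifferentiableAt ℝ F q) (e : E) :
    flux b (0, e) (F ∘ radialProj)
      =ᶠ[𝓝 x] fun z => planarFlux (0, 1) F (radialProj z) * (⟪z.2, e⟫ / ‖z.2‖) := by
  filter_upwards [eventually_ne_zero_and_differentiableAt_radialProj hx hF] with z ⟨hz, hFz⟩
  rw [flux_comp_radialProj b hz hFz, fderiv_comp_radialProj_snd hz hFz]
  simp only [planarFlux, pdA]
  ring

theorem divT_comp_radialProj (hx : x.2 ≠ 0) (hF : ContDiffAt ℝ 2 F (radialProj x)) :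
    divT b (F ∘ radialProj) x = divTA F (radialProj x)
      + (Fintype.card ι - 1) / ‖x.2‖ * planarFlux (0, 1) F (radialProj x) := by
  have hdiff : ∀ᶠ q in 𝓝 (radialProj x), DifferentiableAt ℝ F q :=
    (hF.eventually (by simp)).mono fun q hq => hq.differentiableAt two_ne_zero
  have hsnd : ∀ i, fderiv ℝ (flux b (0, b i) (F ∘ radialProj)) x (0, b i)
      = fderiv ℝ (fun z => planarFlux (0, 1) F (radialProj z) * (⟪z.2, b i⟫ / ‖z.2‖)) x (0, b i) :=
    fun i => by rw [(flux_snd_comp_radialProj_eventuallyEq b hx hdiff (b i)).fderiv_eq]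
  rw [divT, (flux_fst_comp_radialProj_eventuallyEq b hx hdiff).fderiv_eq,
    Finset.sum_congr rfl fun i _ => hsnd i,
    fderiv_comp_radialProj_fst hx (hF.differentiableAt_planarFlux _),
    sum_fderiv_comp_radialProj_mul_inner_div_norm b hx (hF.differentiableAt_planarFlux _),
    divTA_eq, pdA, pdA]
  ring

end Divergence

theorem stmt7_general (n : ℕ) (hn : 2 ≤ n) (Ω : Set (ℝ × ℝ)) (hΩopen : IsOpen Ω)
    (g : ℝ × ℝ → ℝ) (hg : ContDiffOn ℝ 2 g Ω)
    (gt : ℝ × EuclideanSpace ℝ (Fin (n-1)) → ℝ)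
    (hgt : ∀ x, gt x = g (x.1, ‖x.2‖))
    (x : ℝ × EuclideanSpace ℝ (Fin (n-1)))
    (hr : 0 < ‖x.2‖) (hx : (x.1, ‖x.2‖) ∈ Ω) :
    divTB n gt x
      = divTA g (x.1, ‖x.2‖)
        + ((n : ℝ) - 2) / ‖x.2‖ * pdA (0, 1) g (x.1, ‖x.2‖) /
            Real.sqrt (1 + (pdA (1, 0) g (x.1, ‖x.2‖))^2
              + (pdA (0, 1) g (x.1, ‖x.2‖))^2) := by
  have hgt_comp : gt = g ∘ radialProj := funext hgt
  have hgC : ContDiffAt ℝ 2 g (radialProj x) := hg.contDiffAt (hΩopen.mem_nhds hx)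
  rw [hgt_comp, divTB_eq_divT, divT_comp_radialProj _ (norm_pos_iff.mp hr) hgC, Fintype.card_fin,
    Nat.cast_sub (by omega : 1 ≤ n)]
  simp only [radialProj, planarFlux]
  ring

/-- The mean-curvature identity for the rotationally symmetric extension
`g̃(x₁,x') = g(x₁,|x'|)`:
`div(Tg̃)(x) = div(Tg)(x₁,r) + ((n-2)/r)·g_{x₂}(x₁,r)/√(1+|∇g(x₁,r)|²)`. -/
theorem stmt7 (n : ℕ) (hn : 2 ≤ n) (Ω : Set (ℝ × ℝ)) (hΩopen : IsOpen Ω)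
    (hΩ : Ω ⊆ {q : ℝ × ℝ | 0 < q.2})
    (g : ℝ × ℝ → ℝ) (hg : ContDiffOn ℝ 2 g Ω)
    (gt : ℝ × EuclideanSpace ℝ (Fin (n-1)) → ℝ)
    (hgt : ∀ x, gt x = g (x.1, ‖x.2‖))
    (x : ℝ × EuclideanSpace ℝ (Fin (n-1)))
    (hr : 0 < ‖x.2‖) (hx : (x.1, ‖x.2‖) ∈ Ω) :
    divTB n gt x
      = divTA g (x.1, ‖x.2‖)
        + ((n : ℝ) - 2) / ‖x.2‖ * pdA (0, 1) g (x.1, ‖x.2‖) /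
            Real.sqrt (1 + (pdA (1, 0) g (x.1, ‖x.2‖))^2
              + (pdA (0, 1) g (x.1, ‖x.2‖))^2) :=
  stmt7_general n hn Ω hΩopen g hg gt hgt x hr hx
end

section
/- Let n ≥ 2, R > 0, let Ω ⊆ {(x₁,x₂) ∈ ℝ² : x₂ ≥ R} be open, let g be C² on Ω, and let H : Ω → ℝ satisfy H ≥ 0 on Ω. Define g̃(x₁, x') = g(x₁, |x'|) and H̃(x₁, x') = H(x₁, |x'|) for (x₁,x') ∈ ℝ × ℝ^{n-1} with (x₁,|x'|) ∈ Ω. If div( ∇g/√(1+|∇g|²) ) ≥ H + (n-2)/R everywhere on Ω, then div( ∇g̃/√(1+|∇g̃|²) )(x) ≥ H̃(x) for every x = (x₁,x') with |x'| > 0 and (x₁,|x'|) ∈ Ω. -/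
/-
Let `φ = rotProj : (x₁, x') ↦ (x₁, |x'|)`, so `g̃ = g ∘ φ`. Since `∂ᵢg̃ = (∂₂g ∘ φ) · xᵢ/|x'|` for
`i ≥ 2`, we have `|∇g̃| = |∇g| ∘ φ`, hence `Tg̃ = ((Tg)₁ ∘ φ, ((Tg)₂ ∘ φ) · x'/|x'|)`. As
`div (x'/|x'|) = (n - 2)/|x'|` in `ℝ^{n-1}`, this gives
`div Tg̃ = div Tg ∘ φ + (n - 2)/|x'| · (Tg)₂ ∘ φ`.
Finally `|(Tg)₂| ≤ 1` and `|x'| ≥ R`, so the extra term is at least `-(n - 2)/R`.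
-/

open Real Set

open Filter Topology

section RotProj

variable {E : Type*} [NormedAddCommGroup E]

noncomputable def rotProj (z : ℝ × E) : ℝ × ℝ := (z.1, ‖z.2‖)

theorem continuous_rotProj : Continuous (rotProj (E := E)) :=
  continuous_fst.prodMk continuous_snd.norm

variable [InnerProductSpace ℝ E]

theorem hasFDerivAt_norm_of_ne_zero_s8 {y : E} (hy : y ≠ 0) :
    HasFDerivAt (fun z : E => ‖z‖) (‖y‖⁻¹ • innerSL ℝ y) y := by
  have hsq₀ : HasFDerivAt (fun z : E => ‖z‖ ^ 2) (2 • innerSL ℝ y) y := by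
    simpa using (hasFDerivAt_id y).norm_sq
  have hsq := hsq₀.sqrt (pow_ne_zero 2 (norm_ne_zero_iff.mpr hy))
  simp only [Real.sqrt_sq (norm_nonneg _)] at hsq
  convert hsq using 1
  ext v
  simp
  ring

theorem hasFDerivAt_rotProj {y : ℝ × E} (hy : y.2 ≠ 0) :
    HasFDerivAt rotProj ((ContinuousLinearMap.fst ℝ ℝ E).prod
      ((‖y.2‖⁻¹ • innerSL ℝ y.2).comp (ContinuousLinearMap.snd ℝ ℝ E))) y :=
  hasFDerivAt_fst.prodMk ((hasFDerivAt_norm_of_ne_zero_s8 hy).comp y hasFDerivAt_snd)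

theorem fderiv_comp_rotProj_apply {F : ℝ × ℝ → ℝ} {y : ℝ × E} (hy : y.2 ≠ 0)
    (hF : DifferentiableAt ℝ F (rotProj y)) (v : ℝ × E) :
    fderiv ℝ (fun z => F (rotProj z)) y v
      = fderiv ℝ F (rotProj y) (v.1, ‖y.2‖⁻¹ * inner ℝ y.2 v.2) := by
  have hFφ : HasFDerivAt (fun z => F (rotProj z)) _ y :=
    hF.hasFDerivAt.comp y (hasFDerivAt_rotProj hy)
  simp [hFφ.fderiv]

end RotProj

/-- The `v`-component of `Tg = ∇g / √(1 + |∇g|²)`, so that `divTA g = ∂₁ (Tcomp (1, 0) g) +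
∂₂ (Tcomp (0, 1) g)`. -/
noncomputable def Tcomp (v : ℝ × ℝ) (g : ℝ × ℝ → ℝ) (p : ℝ × ℝ) : ℝ :=
  pdA v g p / √(1 + pdA (1, 0) g p ^ 2 + pdA (0, 1) g p ^ 2)

theorem abs_Tcomp_snd_le_one (g : ℝ × ℝ → ℝ) (p : ℝ × ℝ) : |Tcomp (0, 1) g p| ≤ 1 := by
  rw [Tcomp, abs_div, abs_of_nonneg (Real.sqrt_nonneg _), div_le_one₀ (by positivity),
    ← Real.sqrt_sq_eq_abs]
  exact Real.sqrt_le_sqrt (by nlinarith [sq_nonneg (pdA (1, 0) g p)])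

theorem ContDiffAt.differentiableAt_Tcomp {g : ℝ × ℝ → ℝ} {p : ℝ × ℝ}
    (hg : ContDiffAt ℝ 2 g p) (v : ℝ × ℝ) : DifferentiableAt ℝ (Tcomp v g) p := by
  have hpd : ∀ w : ℝ × ℝ, DifferentiableAt ℝ (pdA w g) p := fun w =>
    ((hg.fderiv_right (m := 1) le_rfl).differentiableAt one_ne_zero).clm_apply
      (differentiableAt_const w)
  have hW : DifferentiableAt ℝ (fun q => 1 + pdA (1, 0) g q ^ 2 + pdA (0, 1) g q ^ 2) p :=
    ((differentiableAt_const 1).add ((hpd _).pow 2)).add ((hpd _).pow 2)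
  unfold Tcomp
  simp only [div_eq_mul_inv]
  exact (hpd v).mul ((hW.sqrt (by positivity)).fun_inv (by positivity))

section Euclidean

variable {n : ℕ}

theorem pdB_fst_comp_rotProj {F : ℝ × ℝ → ℝ} {y : ℝ × EuclideanSpace ℝ (Fin (n - 1))}
    (hy : y.2 ≠ 0) (hF : DifferentiableAt ℝ F (rotProj y)) :
    pdB n (1, 0) (fun z => F (rotProj z)) y = pdA (1, 0) F (rotProj y) := by
  simp [pdB, pdA, fderiv_comp_rotProj_apply hy hF]

theorem pdB_single_comp_rotProj {F : ℝ × ℝ → ℝ} {y : ℝ × EuclideanSpace ℝ (Fin (n - 1))}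
    (hy : y.2 ≠ 0) (hF : DifferentiableAt ℝ F (rotProj y)) (i : Fin (n - 1)) :
    pdB n (0, EuclideanSpace.single i 1) (fun z => F (rotProj z)) y
      = pdA (0, 1) F (rotProj y) * (y.2 i / ‖y.2‖) := by
  have hv : ((0 : ℝ), ‖y.2‖⁻¹ * inner ℝ y.2 (EuclideanSpace.single i (1 : ℝ)))
      = (y.2 i / ‖y.2‖) • ((0 : ℝ), (1 : ℝ)) := by
    simp [div_eq_inv_mul, EuclideanSpace.inner_single_right]
  rw [pdB, fderiv_comp_rotProj_apply hy hF, hv, map_smul, smul_eq_mul, mul_comm, pdA]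

theorem sum_sq_pdB_single_comp_rotProj {F : ℝ × ℝ → ℝ}
    {y : ℝ × EuclideanSpace ℝ (Fin (n - 1))} (hy : y.2 ≠ 0)
    (hF : DifferentiableAt ℝ F (rotProj y)) :
    ∑ j, pdB n (0, EuclideanSpace.single j 1) (fun z => F (rotProj z)) y ^ 2
      = pdA (0, 1) F (rotProj y) ^ 2 := by
  simp_rw [pdB_single_comp_rotProj hy hF, mul_pow, div_pow, ← Finset.mul_sum, ← Finset.sum_div,
    ← EuclideanSpace.real_norm_sq_eq]
  field_simp [norm_ne_zero_iff.mpr hy]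

theorem pdB_single_coord_div_norm {y : ℝ × EuclideanSpace ℝ (Fin (n - 1))} (hy : y.2 ≠ 0)
    (i : Fin (n - 1)) :
    pdB n (0, EuclideanSpace.single i 1) (fun z => z.2 i / ‖z.2‖) y
      = ‖y.2‖⁻¹ - y.2 i ^ 2 / ‖y.2‖ ^ 3 := by
  have hnorm := (hasFDerivAt_norm_of_ne_zero_s8 hy).comp y
    (hasFDerivAt_snd (p := y) (𝕜 := ℝ) (E := ℝ))
  have hinv := (hasDerivAt_inv (norm_ne_zero_iff.mpr hy)).comp_hasFDerivAt y hnorm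
  have hcoord := ((EuclideanSpace.proj (𝕜 := ℝ) (ι := Fin (n - 1)) i).comp
    (ContinuousLinearMap.snd ℝ ℝ (EuclideanSpace ℝ (Fin (n - 1))))).hasFDerivAt (x := y)
  have hquot : HasFDerivAt (fun z : ℝ × EuclideanSpace ℝ (Fin (n - 1)) => z.2 i * ‖z.2‖⁻¹) _ y :=
    hcoord.mul hinv
  simp_rw [pdB, div_eq_mul_inv, hquot.fderiv]
  simp [EuclideanSpace.inner_single_right]
  field_simp
  ring

theorem sum_pdB_single_radial (hn : 1 ≤ n) {h : ℝ × ℝ → ℝ}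
    {y : ℝ × EuclideanSpace ℝ (Fin (n - 1))} (hy : y.2 ≠ 0)
    (hh : DifferentiableAt ℝ h (rotProj y)) :
    ∑ i, pdB n (0, EuclideanSpace.single i 1) (fun z => h (rotProj z) * (z.2 i / ‖z.2‖)) y
      = pdA (0, 1) h (rotProj y) + ((n : ℝ) - 2) / ‖y.2‖ * h (rotProj y) := by
  have hr : ‖y.2‖ ≠ 0 := norm_ne_zero_iff.mpr hy
  have hhφ : DifferentiableAt ℝ (fun z => h (rotProj z)) y :=
    hh.comp y (hasFDerivAt_rotProj hy).differentiableAt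
  have hterm : ∀ i, pdB n (0, EuclideanSpace.single i 1)
      (fun z => h (rotProj z) * (z.2 i / ‖z.2‖)) y
        = pdA (0, 1) h (rotProj y) / ‖y.2‖ ^ 2 * y.2 i ^ 2
          + h (rotProj y) * (‖y.2‖⁻¹ - y.2 i ^ 2 / ‖y.2‖ ^ 3) := by
    intro i
    have hquot : DifferentiableAt ℝ
        (fun z : ℝ × EuclideanSpace ℝ (Fin (n - 1)) => z.2 i / ‖z.2‖) y := by
      simp_rw [div_eq_mul_inv]
      exact ((EuclideanSpace.proj (𝕜 := ℝ) i).comp (ContinuousLinearMap.snd ℝ ℝ _)).differentiableAt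
        |>.mul ((differentiableAt_snd.norm ℝ hy).inv hr)
    rw [pdB, fderiv_fun_mul hhφ hquot]
    simp only [add_apply, smul_apply, smul_eq_mul]
    rw [← pdB, ← pdB, pdB_single_coord_div_norm hy, pdB_single_comp_rotProj hy hh]
    ring
  have hcard : ((n - 1 : ℕ) : ℝ) = n - 1 := Nat.cast_sub hn |>.trans (by simp)
  simp_rw [hterm, Finset.sum_add_distrib, ← Finset.mul_sum, Finset.sum_sub_distrib,
    ← Finset.sum_div, ← EuclideanSpace.real_norm_sq_eq, Finset.sum_const, Finset.card_univ,
    Fintype.card_fin, nsmul_eq_mul, hcard]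
  field_simp
  ring

theorem divTB_comp_rotProj (hn : 1 ≤ n) {g : ℝ × ℝ → ℝ}
    {x : ℝ × EuclideanSpace ℝ (Fin (n - 1))} (hx : x.2 ≠ 0) (hg : ContDiffAt ℝ 2 g (rotProj x)) :
    divTB n (fun y => g (rotProj y)) x
      = divTA g (rotProj x) + ((n : ℝ) - 2) / ‖x.2‖ * Tcomp (0, 1) g (rotProj x) := by
  have hnear : ∀ᶠ y in 𝓝 x, y.2 ≠ 0 ∧ DifferentiableAt ℝ g (rotProj y) :=
    (continuous_snd.continuousAt.eventually_ne hx).and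
      (continuous_rotProj.continuousAt.eventually (hg.eventually (by simp))
        |>.mono fun y hy => hy.differentiableAt two_ne_zero)
  have hsq : ∀ᶠ y in 𝓝 x, 1 + pdB n (1, 0) (fun z => g (rotProj z)) y ^ 2
        + ∑ j, pdB n (0, EuclideanSpace.single j 1) (fun z => g (rotProj z)) y ^ 2
      = 1 + pdA (1, 0) g (rotProj y) ^ 2 + pdA (0, 1) g (rotProj y) ^ 2 :=
    hnear.mono fun y ⟨hy, hgy⟩ => by
      rw [pdB_fst_comp_rotProj hy hgy, sum_sq_pdB_single_comp_rotProj hy hgy]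
  have hfirst : (fun y => pdB n (1, 0) (fun z => g (rotProj z)) y
        / √(1 + pdB n (1, 0) (fun z => g (rotProj z)) y ^ 2
          + ∑ j, pdB n (0, EuclideanSpace.single j 1) (fun z => g (rotProj z)) y ^ 2))
      =ᶠ[𝓝 x] fun y => Tcomp (1, 0) g (rotProj y) :=
    (hnear.and hsq).mono fun y ⟨⟨hy, hgy⟩, hW⟩ => by
      dsimp only
      rw [hW, pdB_fst_comp_rotProj hy hgy, Tcomp]
  have hrad : ∀ i, (fun y => pdB n (0, EuclideanSpace.single i 1) (fun z => g (rotProj z)) y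
        / √(1 + pdB n (1, 0) (fun z => g (rotProj z)) y ^ 2
          + ∑ j, pdB n (0, EuclideanSpace.single j 1) (fun z => g (rotProj z)) y ^ 2))
      =ᶠ[𝓝 x] fun y => Tcomp (0, 1) g (rotProj y) * (y.2 i / ‖y.2‖) := fun i =>
    (hnear.and hsq).mono fun y ⟨⟨hy, hgy⟩, hW⟩ => by
      dsimp only
      rw [hW, pdB_single_comp_rotProj hy hgy, Tcomp]
      ring
  rw [divTB, pdB, hfirst.fderiv_eq, ← pdB, pdB_fst_comp_rotProj hx (hg.differentiableAt_Tcomp _),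
    Finset.sum_congr rfl fun i _ => by rw [pdB, (hrad i).fderiv_eq, ← pdB],
    sum_pdB_single_radial hn hx (hg.differentiableAt_Tcomp _), ← add_assoc]
  rfl

end Euclidean

theorem stmt8_general (n : ℕ) (hn : 2 ≤ n) (R : ℝ) (hR : 0 < R)
    (Ω : Set (ℝ × ℝ)) (hΩopen : IsOpen Ω)
    (hΩ : Ω ⊆ {q : ℝ × ℝ | R ≤ q.2})
    (g : ℝ × ℝ → ℝ) (hg : ContDiffOn ℝ 2 g Ω)
    (H : ℝ × ℝ → ℝ)
    (hgH : ∀ q ∈ Ω, H q + ((n : ℝ) - 2) / R ≤ divTA g q)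
    (gt : ℝ × EuclideanSpace ℝ (Fin (n-1)) → ℝ)
    (hgt : ∀ x, gt x = g (x.1, ‖x.2‖)) :
    ∀ x : ℝ × EuclideanSpace ℝ (Fin (n-1)),
      0 < ‖x.2‖ → (x.1, ‖x.2‖) ∈ Ω → H (x.1, ‖x.2‖) ≤ divTB n gt x := by
  intro x hx hxΩ
  obtain rfl : gt = fun y => g (rotProj y) := funext hgt
  change H (rotProj x) ≤ _
  have hn2 : (0 : ℝ) ≤ n - 2 := by simpa using (Nat.cast_le (α := ℝ)).mpr hn
  have hcoef_nonneg : 0 ≤ ((n : ℝ) - 2) / ‖x.2‖ := div_nonneg hn2 hx.le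
  have hcoef_le : ((n : ℝ) - 2) / ‖x.2‖ ≤ ((n : ℝ) - 2) / R :=
    div_le_div_of_nonneg_left hn2 hR (hΩ hxΩ)
  have hT : -1 ≤ Tcomp (0, 1) g (rotProj x) := (abs_le.mp (abs_Tcomp_snd_le_one g _)).1
  rw [divTB_comp_rotProj (by omega) (norm_pos_iff.mp hx) (hg.contDiffAt (hΩopen.mem_nhds hxΩ))]
  nlinarith [hgH (rotProj x) hxΩ]

/-- If `div(Tg) ≥ H + (n-2)/R` on `Ω ⊆ {x₂ ≥ R}` and `H ≥ 0`, then the rotationally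
symmetric extension satisfies `div(Tg̃) ≥ H̃`. -/
theorem stmt8 (n : ℕ) (hn : 2 ≤ n) (R : ℝ) (hR : 0 < R)
    (Ω : Set (ℝ × ℝ)) (hΩopen : IsOpen Ω)
    (hΩ : Ω ⊆ {q : ℝ × ℝ | R ≤ q.2})
    (g : ℝ × ℝ → ℝ) (hg : ContDiffOn ℝ 2 g Ω)
    (H : ℝ × ℝ → ℝ) (hH : ∀ q ∈ Ω, 0 ≤ H q)
    (hgH : ∀ q ∈ Ω, H q + ((n : ℝ) - 2) / R ≤ divTA g q)
    (gt : ℝ × EuclideanSpace ℝ (Fin (n-1)) → ℝ)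
    (hgt : ∀ x, gt x = g (x.1, ‖x.2‖)) :
    ∀ x : ℝ × EuclideanSpace ℝ (Fin (n-1)),
      0 < ‖x.2‖ → (x.1, ‖x.2‖) ∈ Ω → H (x.1, ‖x.2‖) ≤ divTB n gt x :=
  stmt8_general n hn R hR Ω hΩopen hΩ g hg H hgH gt hgt
end

section
/- Let m₀ > 0, p > 0, and suppose 0 < b < (1 + 2m₀p - √(1 + 4m₀²p²))/(4m₀). Then for every a ≥ p, ((a+p)/2 - 2b) / (4b·((a+p)/2 - b)) > m₀. In particular b < p, (a+p)/2 - b > 0 and (a+p)/2 - 2b > 0 under these hypotheses. -/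
open Real

/-- If `0 < b < (1 + 2m₀p - √(1 + 4m₀²p²))/(4m₀)` with `m₀, p > 0`, then `b < p` and for
every `a ≥ p` one has `(a+p)/2 - b > 0`, `(a+p)/2 - 2b > 0` and
`((a+p)/2 - 2b)/(4b·((a+p)/2 - b)) > m₀`. -/
theorem stmt9 (m₀ p b : ℝ) (hm₀ : 0 < m₀) (hp : 0 < p) (hb : 0 < b)
    (hb' : b < (1 + 2 * m₀ * p - Real.sqrt (1 + 4 * m₀^2 * p^2)) / (4 * m₀)) :
    b < p ∧
    ∀ a : ℝ, p ≤ a →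
      0 < (a + p) / 2 - b ∧
      0 < (a + p) / 2 - 2 * b ∧
      m₀ < ((a + p) / 2 - 2 * b) / (4 * b * ((a + p) / 2 - b)) := by
  set s := Real.sqrt (1 + 4 * m₀^2 * p^2) with hs_def
  have hs_nonneg : 0 ≤ s := Real.sqrt_nonneg _
  have hs_sq : s^2 = 1 + 4 * m₀^2 * p^2 := by
    rw [hs_def, Real.sq_sqrt]; positivity
  -- b multiplied out
  have hb2 : 4 * m₀ * b < 1 + 2 * m₀ * p - s := by
    have := (lt_div_iff₀ (by positivity : (0:ℝ) < 4 * m₀)).mp hb'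
    linarith
  have hsup : s < 1 + 2 * m₀ * p - 4 * m₀ * b := by linarith
  have hpos : 0 < 1 + 2 * m₀ * p - 4 * m₀ * b := lt_of_le_of_lt hs_nonneg hsup
  have hsq : 1 + 4 * m₀^2 * p^2 < (1 + 2 * m₀ * p - 4 * m₀ * b)^2 := by
    calc 1 + 4 * m₀^2 * p^2 = s^2 := hs_sq.symm
    _ < (1 + 2 * m₀ * p - 4 * m₀ * b)^2 := by nlinarith
  -- key quadratic
  have hq : 0 < 4 * m₀ * b^2 - (2 + 4 * m₀ * p) * b + p := by nlinarith
  -- 4 m₀ b < 1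
  have hs_gt : 2 * m₀ * p < s := by nlinarith [hs_sq, hs_nonneg]
  have h1 : 4 * m₀ * b < 1 := by linarith
  have hbp : b < p := by nlinarith
  refine ⟨hbp, fun a ha => ?_⟩
  have hrp : p ≤ (a + p) / 2 := by linarith
  have hrb : 0 < (a + p) / 2 - b := by linarith
  have hp2b : 0 < p - 2 * b := by nlinarith
  have hr2b : 0 < (a + p) / 2 - 2 * b := by linarith
  refine ⟨hrb, hr2b, ?_⟩
  rw [lt_div_iff₀ (by positivity)]
  nlinarith [mul_nonneg (sub_nonneg.mpr hrp) (le_of_lt (by linarith : 0 < 1 - 4 * m₀ * b))]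
end

section
/- Let m₀ > 0, p > 0, 0 < b < (1 + 2m₀p - √(1 + 4m₀²p²))/(4m₀), and p < a < p + b. Set R = (a+p)/2, c = √(b² - ((a-p)/2)²), and define j : {x ∈ ℝ² : R - b ≤ |x| ≤ R + b} → ℝ by j(x) = c - √(b² - (|x| - R)²). Then: (i) j(x) = 0 whenever |x| = p or |x| = a; (ii) j(x) < 0 whenever p < |x| < a; (iii) j(x) > 0 whenever R - b ≤ |x| < p or a < |x| ≤ R + b; and (iv) |j(x)| < 1/(2m₀) for all x in the annulus R - b ≤ |x| ≤ R + b. -/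
open Real

set_option maxHeartbeats 1000000 in
/-- The lower-half-torus function `j(x) = c - √(b² - (|x| - R)²)` on the annulus
`R - b ≤ |x| ≤ R + b`, with `R = (a+p)/2` and `c = √(b² - ((a-p)/2)²)`: it vanishes on
`|x| = p` and `|x| = a`, is negative for `p < |x| < a`, positive elsewhere in the
annulus, and satisfies `|j| < 1/(2m₀)`. -/
theorem stmt14 (m₀ p b a : ℝ) (hm₀ : 0 < m₀) (hp : 0 < p) (hb : 0 < b)
    (hb' : b < (1 + 2 * m₀ * p - Real.sqrt (1 + 4 * m₀^2 * p^2)) / (4 * m₀))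
    (ha : p < a) (ha' : a < p + b)
    (R c : ℝ) (hR : R = (a + p) / 2) (hc : c = Real.sqrt (b^2 - ((a - p) / 2)^2))
    (j : EuclideanSpace ℝ (Fin 2) → ℝ)
    (hj : ∀ x, j x = c - Real.sqrt (b^2 - (‖x‖ - R)^2)) :
    (∀ x : EuclideanSpace ℝ (Fin 2), ‖x‖ = p ∨ ‖x‖ = a → j x = 0) ∧
    (∀ x : EuclideanSpace ℝ (Fin 2), p < ‖x‖ → ‖x‖ < a → j x < 0) ∧
    (∀ x : EuclideanSpace ℝ (Fin 2),
      (R - b ≤ ‖x‖ ∧ ‖x‖ < p) ∨ (a < ‖x‖ ∧ ‖x‖ ≤ R + b) → 0 < j x) ∧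
    (∀ x : EuclideanSpace ℝ (Fin 2), R - b ≤ ‖x‖ → ‖x‖ ≤ R + b →
      |j x| < 1 / (2 * m₀)) := by
  subst hR
  have hd0 : 0 < (a - p) / 2 := by linarith
  have hdb : (a - p) / 2 < b := by linarith
  have hc2 : c ^ 2 = b ^ 2 - ((a - p) / 2) ^ 2 := by
    rw [hc]; exact Real.sq_sqrt (by nlinarith)
  have hc0 : 0 < c := by
    rw [hc]; exact Real.sqrt_pos.mpr (by nlinarith)
  have hcb : c < b := by nlinarith
  have hbm : b < 1 / (2 * m₀) := by
    have hs0 : 0 ≤ Real.sqrt (1 + 4 * m₀ ^ 2 * p ^ 2) := Real.sqrt_nonneg _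
    have hs2 : (Real.sqrt (1 + 4 * m₀ ^ 2 * p ^ 2)) ^ 2 = 1 + 4 * m₀ ^ 2 * p ^ 2 :=
      Real.sq_sqrt (by positivity)
    have hsgt : 2 * m₀ * p < Real.sqrt (1 + 4 * m₀ ^ 2 * p ^ 2) := by
      nlinarith [mul_pos hm₀ hp]
    have hb4 : b < 1 / (4 * m₀) := by
      have h4 : 0 < 4 * m₀ := by linarith
      rw [lt_div_iff₀ h4] at hb' ⊢; nlinarith
    have : 0 < 4 * m₀ := by linarith
    rw [lt_div_iff₀ (by linarith)] at hb4 ⊢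
    nlinarith
  have hEb : ∀ t : ℝ, b ^ 2 - (t - (a + p) / 2) ^ 2 ≤ b ^ 2 := by
    intro t; nlinarith [sq_nonneg (t - (a + p) / 2)]
  refine ⟨?_, ?_, ?_, ?_⟩
  · intro x hx
    rw [hj]
    have e : (‖x‖ - (a + p) / 2) ^ 2 = ((a - p) / 2) ^ 2 := by
      rcases hx with h | h <;> rw [h] <;> ring
    rw [e, show b ^ 2 - ((a - p) / 2) ^ 2 = c ^ 2 from hc2.symm, Real.sqrt_sq hc0.le]
    ring
  · intro x h1 h2
    rw [hj]
    have : c < Real.sqrt (b ^ 2 - (‖x‖ - (a + p) / 2) ^ 2) := by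
      rw [Real.lt_sqrt hc0.le, hc2]
      nlinarith [mul_pos (sub_pos.mpr h1) (sub_pos.mpr h2)]
    linarith
  · intro x hx
    rw [hj]
    obtain ⟨t, ht⟩ : ∃ t, ‖x‖ = t := ⟨‖x‖, rfl⟩
    rw [ht] at hx ⊢
    have : Real.sqrt (b ^ 2 - (t - (a + p) / 2) ^ 2) < c := by
      rw [Real.sqrt_lt' hc0, hc2]
      rcases hx with ⟨h1, h2⟩ | ⟨h1, h2⟩
      · nlinarith [mul_pos (sub_pos.mpr h2) (sub_pos.mpr (h2.trans ha))]
      · nlinarith [mul_pos (sub_pos.mpr (ha.trans h1)) (sub_pos.mpr h1)]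
    linarith
  · intro x h1 h2
    rw [hj, abs_lt]
    have hs0 : 0 ≤ Real.sqrt (b ^ 2 - (‖x‖ - (a + p) / 2) ^ 2) := Real.sqrt_nonneg _
    have hsb : Real.sqrt (b ^ 2 - (‖x‖ - (a + p) / 2) ^ 2) ≤ b := by
      calc Real.sqrt (b ^ 2 - (‖x‖ - (a + p) / 2) ^ 2) ≤ Real.sqrt (b ^ 2) :=
            Real.sqrt_le_sqrt (hEb _)
        _ = b := Real.sqrt_sq hb.le
    constructor <;> linarith
end
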